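/- Let n and r be positive integers with max{n, r} > 1 and (n, r) ≠ (2, 1), let θ ∈ (0, π/r), and let (θ_1, …, θ_n) be an admissible tuple for (θ, n − 1). Then r − Σ_{k=1}^n (sin θ_k / sin θ) · cos(θ_k − θ) > 0. -/

import Mathlib

/-- A tuple `Θ = (θ_1, …, θ_n)` is admissible for `(θ, l)` if `θ < θ_k < π` for all `k`,
`∑ θ_k = rθ + lπ`, and the quantities `τ_k sin θ_k / sin(θ_k - θ)` are all equal. -/
def IsAdmissible (n : ℕ) (τv : Fin n → ℝ) (r : ℕ) (θ : ℝ) (l : ℕ)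
    (Θ : Fin n → ℝ) : Prop :=
  (∀ k, θ < Θ k ∧ Θ k < Real.pi) ∧
  (∑ k, Θ k = r * θ + l * Real.pi) ∧
  ∀ j k, τv j * Real.sin (Θ j) / Real.sin (Θ j - θ) =
    τv k * Real.sin (Θ k) / Real.sin (Θ k - θ)

/-!
Put `y_k = 2(π - θ_k) > 0`; then `∑ y_k = 2(π - rθ)` and
`2 sin θ_k cos(θ_k - θ) = sin θ - sin(θ + y_k)`, so the claim says that
`∑ (sin(θ + y_k) - sin θ) > -2r sin θ`. The increment `y ↦ sin(θ + y) - sin θ` is superadditive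
as long as the arguments stay in `[θ, 2π - θ]`, because
`sin(θ+a) + sin(θ+b) - sin θ - sin(θ+a+b) = 4 sin(θ + (a+b)/2) sin(a/2) sin(b/2)`.
Hence the sum is at least `sin(θ + 2(π - rθ)) - sin θ = -sin((2r-1)θ) - sin θ`.
For `r ≥ 2` the bound `sin((2r-1)θ) < (2r-1) sin θ` (superadditivity again, at base point `0`)
finishes the proof; for `r = 1` we have `n ≥ 3`, and superadditivity is then strict.
-/

open Real Finset

noncomputable def sinIncr (t y : ℝ) : ℝ := sin (t + y) - sin t

lemma sinIncr_add_sinIncr_sub_sinIncr_add (t a b : ℝ) :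
    sinIncr t a + sinIncr t b - sinIncr t (a + b) =
      4 * sin (t + (a + b) / 2) * sin (a / 2) * sin (b / 2) := by
  have key : ∀ φ u v : ℝ, sin (φ + (u - v)) + sin (φ - (u - v)) - sin (φ - (u + v))
      - sin (φ + (u + v)) = 4 * sin φ * sin u * sin v := by
    intro φ u v
    simp only [sin_add, sin_sub, cos_add, cos_sub]
    ring
  have h := key (t + (a + b) / 2) (a / 2) (b / 2)
  rw [show t + (a + b) / 2 + (a / 2 - b / 2) = t + a by ring,
    show t + (a + b) / 2 - (a / 2 - b / 2) = t + b by ring,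
    show t + (a + b) / 2 - (a / 2 + b / 2) = t by ring,
    show t + (a + b) / 2 + (a / 2 + b / 2) = t + (a + b) by ring] at h
  unfold sinIncr
  linarith

lemma sinIncr_add_le {t a b : ℝ} (ht : 0 ≤ t) (ha : 0 ≤ a) (hb : 0 ≤ b)
    (hab : a + b ≤ 2 * π - 2 * t) :
    sinIncr t (a + b) ≤ sinIncr t a + sinIncr t b := by
  have h := sinIncr_add_sinIncr_sub_sinIncr_add t a b
  have h₁ : 0 ≤ sin (t + (a + b) / 2) :=
    sin_nonneg_of_nonneg_of_le_pi (by linarith) (by linarith)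
  have h₂ : 0 ≤ sin (a / 2) := sin_nonneg_of_nonneg_of_le_pi (by linarith) (by linarith)
  have h₃ : 0 ≤ sin (b / 2) := sin_nonneg_of_nonneg_of_le_pi (by linarith) (by linarith)
  nlinarith [mul_nonneg (mul_nonneg h₁ h₂) h₃]

lemma sinIncr_add_lt {t a b : ℝ} (ht : 0 ≤ t) (ha : 0 < a) (hb : 0 < b)
    (hab : a + b < 2 * π - 2 * t) :
    sinIncr t (a + b) < sinIncr t a + sinIncr t b := by
  have h := sinIncr_add_sinIncr_sub_sinIncr_add t a b
  have h₁ : 0 < sin (t + (a + b) / 2) := sin_pos_of_pos_of_lt_pi (by linarith) (by linarith)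
  have h₂ : 0 < sin (a / 2) := sin_pos_of_pos_of_lt_pi (by linarith) (by linarith)
  have h₃ : 0 < sin (b / 2) := sin_pos_of_pos_of_lt_pi (by linarith) (by linarith)
  nlinarith [mul_pos (mul_pos h₁ h₂) h₃]

section Sum

variable {ι : Type*} {t : ℝ} {s : Finset ι} {y : ι → ℝ}

lemma sinIncr_sum_le (ht : 0 ≤ t) (hy : ∀ i ∈ s, 0 ≤ y i)
    (hs : ∑ i ∈ s, y i ≤ 2 * π - 2 * t) :
    sinIncr t (∑ i ∈ s, y i) ≤ ∑ i ∈ s, sinIncr t (y i) := by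
  classical
  induction s using Finset.induction_on with
  | empty => simp [sinIncr]
  | insert a s ha ih =>
    rw [sum_insert ha] at hs ⊢
    rw [sum_insert ha]
    have hya := hy a (mem_insert_self a s)
    have hys : ∀ i ∈ s, 0 ≤ y i := fun i hi => hy i (mem_insert_of_mem hi)
    calc sinIncr t (y a + ∑ i ∈ s, y i)
        ≤ sinIncr t (y a) + sinIncr t (∑ i ∈ s, y i) :=
          sinIncr_add_le ht hya (sum_nonneg hys) hs
      _ ≤ sinIncr t (y a) + ∑ i ∈ s, sinIncr t (y i) := by
          gcongr
          exact ih hys (by linarith)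

lemma sinIncr_sum_lt (ht : 0 ≤ t) (hcard : 3 ≤ #s) (hy : ∀ i ∈ s, 0 < y i)
    (hs : ∑ i ∈ s, y i ≤ 2 * π - 2 * t) :
    sinIncr t (∑ i ∈ s, y i) < ∑ i ∈ s, sinIncr t (y i) := by
  classical
  obtain ⟨a, ha, b, hb, c, hc, hab, hac, hbc⟩ := two_lt_card.mp hcard
  have hb' : b ∈ s.erase a := mem_erase.mpr ⟨hab.symm, hb⟩
  have hsplit : ∀ f : ι → ℝ,
      ∑ i ∈ s, f i = f a + (f b + ∑ i ∈ (s.erase a).erase b, f i) := fun f => by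
    rw [add_sum_erase _ _ hb', add_sum_erase _ _ ha]
  set u := (s.erase a).erase b
  have hyu : ∀ i ∈ u, 0 < y i := fun i hi => hy i (mem_of_mem_erase (mem_of_mem_erase hi))
  have hu : 0 < ∑ i ∈ u, y i :=
    sum_pos hyu ⟨c, mem_erase.mpr ⟨hbc.symm, mem_erase.mpr ⟨hac.symm, hc⟩⟩⟩
  have hya := hy a ha
  have hyb := hy b hb
  rw [hsplit] at hs ⊢
  calc sinIncr t (y a + (y b + ∑ i ∈ u, y i))
      ≤ sinIncr t (y a) + sinIncr t (y b + ∑ i ∈ u, y i) :=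
        sinIncr_add_le ht hya.le (by positivity) hs
    _ < sinIncr t (y a) + (sinIncr t (y b) + sinIncr t (∑ i ∈ u, y i)) := by
        gcongr
        exact sinIncr_add_lt ht hyb hu (by linarith)
    _ ≤ sinIncr t (y a) + (sinIncr t (y b) + ∑ i ∈ u, sinIncr t (y i)) := by
        gcongr
        exact sinIncr_sum_le ht (fun i hi => (hyu i hi).le) (by linarith)
    _ = ∑ i ∈ s, sinIncr t (y i) := (hsplit fun i => sinIncr t (y i)).symm

end Sum

lemma sin_nat_mul_lt {m : ℕ} {θ : ℝ} (hm : 3 ≤ m) (hθ : 0 < θ) (hmθ : m * θ ≤ 2 * π) :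
    sin (m * θ) < m * sin θ := by
  have h := sinIncr_sum_lt (s := range m) (y := fun _ => θ) le_rfl (by simpa using hm)
    (fun _ _ => hθ) (by simpa using hmθ)
  simpa [sinIncr] using h

lemma sinIncr_two_mul_pi_sub (θ x : ℝ) :
    sinIncr θ (2 * (π - x)) = -sin (2 * x - θ) - sin θ := by
  rw [sinIncr, show θ + 2 * (π - x) = -(2 * x - θ) + 2 * π by ring, sin_add_two_pi, sin_neg]

lemma two_mul_sin_mul_cos_sub (x θ : ℝ) :
    2 * (sin x * cos (x - θ)) = -sinIncr θ (2 * (π - x)) := by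
  rw [sinIncr_two_mul_pi_sub, show 2 * x - θ = x + (x - θ) by ring]
  nth_rewrite 3 [show θ = x - (x - θ) by ring]
  simp only [sin_add, sin_sub]
  ring

lemma neg_two_mul_sin_lt_sum_sinIncr {ι : Type*} {s : Finset ι} {y : ι → ℝ} {r : ℕ} {θ : ℝ}
    (hr : 0 < r) (hθ : 0 < θ) (hrθ : r * θ < π) (hy : ∀ i ∈ s, 0 < y i)
    (hsum : ∑ i ∈ s, y i = 2 * (π - r * θ)) (hcard : 2 ≤ r ∨ 3 ≤ #s) :
    -(2 * r * sin θ) < ∑ i ∈ s, sinIncr θ (y i) := by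
  have hθr : θ ≤ r * θ := le_mul_of_one_le_left hθ.le (by exact_mod_cast hr)
  have hs : ∑ i ∈ s, y i ≤ 2 * π - 2 * θ := by linarith
  rcases Nat.lt_or_ge r 2 with hr1 | hr2
  · obtain rfl : r = 1 := by omega
    have h := sinIncr_sum_lt hθ.le (by omega) hy hs
    rw [hsum, sinIncr_two_mul_pi_sub, Nat.cast_one, one_mul, show 2 * θ - θ = θ by ring] at h
    push_cast
    linarith
  · have h := sinIncr_sum_le hθ.le (fun i hi => (hy i hi).le) hs
    rw [hsum, sinIncr_two_mul_pi_sub, show 2 * (r * θ) - θ = (2 * r - 1) * θ by ring] at h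
    have hm : ((2 * r - 1 : ℕ) : ℝ) = 2 * r - 1 := by
      rw [Nat.cast_sub (by omega)]
      push_cast
      ring
    have hmult := sin_nat_mul_lt (m := 2 * r - 1) (θ := θ) (by omega) hθ (by rw [hm]; linarith)
    rw [hm] at hmult
    linarith

theorem A_theta_pos_general
    (n r : ℕ) (hn : 0 < n) (hr : 0 < r) (hmax : 1 < max n r)
    (hne : ¬(n = 2 ∧ r = 1))
    (τv : Fin n → ℝ)
    (θ : ℝ) (hθ : θ ∈ Set.Ioo (0 : ℝ) (Real.pi / r))
    (Θ : Fin n → ℝ) (hΘ : IsAdmissible n τv r θ (n - 1) Θ) :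
    0 < (r : ℝ) - ∑ k, Real.sin (Θ k) / Real.sin θ * Real.cos (Θ k - θ) := by
  obtain ⟨hbounds, hsum, -⟩ := hΘ
  have hrθ : r * θ < π := (lt_div_iff₀' (by positivity)).mp hθ.2
  have hsinθ : 0 < sin θ :=
    sin_pos_of_pos_of_lt_pi hθ.1 (by nlinarith [hθ.1, (Nat.one_le_cast (α := ℝ)).mpr hr])
  set y : Fin n → ℝ := fun k => 2 * (π - Θ k)
  have hy : ∀ k ∈ univ, 0 < y k := fun k _ => by linarith [(hbounds k).2]
  have hysum : ∑ k, y k = 2 * (π - r * θ) := by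
    simp only [y, ← mul_sum, sum_sub_distrib, sum_const, card_univ, Fintype.card_fin,
      nsmul_eq_mul, hsum, Nat.cast_sub hn]
    ring
  have hcard : 2 ≤ r ∨ 3 ≤ #(univ : Finset (Fin n)) := by
    rw [card_univ, Fintype.card_fin]
    omega
  have key := neg_two_mul_sin_lt_sum_sinIncr hr hθ.1 hrθ hy hysum hcard
  have hterm : ∀ k, sin (Θ k) / sin θ * cos (Θ k - θ) = -sinIncr θ (y k) / (2 * sin θ) := by
    intro k
    rw [← two_mul_sin_mul_cos_sub]
    field_simp
  rw [sum_congr rfl fun k _ => hterm k, ← sum_div, sum_neg_distrib, sub_pos,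
    div_lt_iff₀ (by positivity)]
  linarith

/-- If `max{n, r} > 1`, `(n, r) ≠ (2, 1)`, `θ ∈ (0, π/r)` and
`(θ_1, …, θ_n)` is an admissible tuple for `(θ, n - 1)`, then
`r - ∑_k (sin θ_k / sin θ) cos(θ_k - θ) > 0`. -/
theorem A_theta_pos
    (n r : ℕ) (hn : 0 < n) (hr : 0 < r) (hmax : 1 < max n r)
    (hne : ¬(n = 2 ∧ r = 1))
    (P : Polynomial ℝ) (c : ℝ) (hc : c ≠ 0)
    (τv : Fin n → ℝ) (hτmono : Monotone τv) (hτpos : ∀ k, 0 < τv k)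
    (hP : P = Polynomial.C c * ∏ k, (Polynomial.X - Polynomial.C (τv k)))
    (hP0 : 0 < P.eval 0)
    (θ : ℝ) (hθ : θ ∈ Set.Ioo (0 : ℝ) (Real.pi / r))
    (Θ : Fin n → ℝ) (hΘ : IsAdmissible n τv r θ (n - 1) Θ) :
    0 < (r : ℝ) - ∑ k, Real.sin (Θ k) / Real.sin θ * Real.cos (Θ k - θ) :=
  A_theta_pos_general n r hn hr hmax hne τv θ hθ Θ hΘ
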